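/- For every n ≥ 3 there exists a complete NFA with state set Q = {1,2,…,n} and exactly n(n−1)/2 + 1 symbols such that the shortest word synchronizing the full state set Q has length exactly 2^n − n − 1, and such that for every k with 2 ≤ k ≤ n there is a subset S of size k whose shortest synchronizing word has length exactly 2^n − n − 2^{n−k}. -/

import Mathlib

/-- Action of an NFA transition function on a subset of states along a word. -/
def nfaRun {n m : ℕ} (δ : Fin n → Fin m → Finset (Fin n)) :
    Finset (Fin n) → List (Fin m) → Finset (Fin n)
  | S, [] => S
  | S, a :: w => nfaRun δ (S.biUnion fun q => δ q a) w

/-- A word `w` synchronizes the subset `S` in the NFA `δ`. -/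
def nfaSync {n m : ℕ} (δ : Fin n → Fin m → Finset (Fin n)) (S : Finset (Fin n))
    (w : List (Fin m)) : Prop :=
  (nfaRun δ S w).card = 1

/-- `l` is the length of a shortest word synchronizing `S` in the NFA `δ`. -/
def nfaShortestSync {n m : ℕ} (δ : Fin n → Fin m → Finset (Fin n)) (S : Finset (Fin n))
    (l : ℕ) : Prop :=
  (∃ w, nfaSync δ S w ∧ w.length = l) ∧ ∀ w, nfaSync δ S w → l ≤ w.length

/-!
Identify a set of states `S ⊆ {0, …, n - 1}` with the number `v(S) = ∑_{q ∈ S} 2 ^ q`, so that a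
nonempty set has at least two states exactly when its value is not a power of two. On such a set
every letter either acts as the identity, or sends it to the full set, or lowers the value by at most
one, or (the letter `skip t` on `{0, t}`) jumps from `2 ^ t + 1` to `2 ^ t - 1` over the power of two
`2 ^ t`. So the number `v(S) - ⌊log₂ v(S)⌋ - 1` of non-powers of two in `[1, v(S)]` drops by at most
one per letter. Conversely, some letter always lowers it by exactly one: `borrow` and `dropZero`
perform the binary decrement `v ↦ v - 1` and `skip` the jump. The shortest synchronizing word of `S`
therefore has exactly that length, which is `2 ^ n - n - 2 ^ (n - k)` for `S = {n - k, …, n - 1}`.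
-/

section NFAPotential

variable {n m : ℕ}

def nfaStep (δ : Fin n → Fin m → Finset (Fin n)) (S : Finset (Fin n)) (a : Fin m) :
    Finset (Fin n) :=
  S.biUnion fun q => δ q a

variable {δ : Fin n → Fin m → Finset (Fin n)} (ψ : Finset (Fin n) → ℕ)

theorem le_length_of_nfaSync (hψ : ∀ S, S.card ≤ 1 → ψ S = 0)
    (hle : ∀ S a, 2 ≤ S.card → ψ S ≤ ψ (nfaStep δ S a) + 1) :
    ∀ {S : Finset (Fin n)} {w : List (Fin m)}, nfaSync δ S w → ψ S ≤ w.length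
  | S, [], h => (hψ S h.le).le
  | S, a :: w, h => by
    rcases le_or_gt 2 S.card with hS | hS
    · have ih : ψ (nfaStep δ S a) ≤ w.length := le_length_of_nfaSync hψ hle h
      simpa using (hle S a hS).trans (Nat.add_le_add_right ih 1)
    · simp [hψ S (by omega)]

theorem exists_nfaSync_length_eq (hne : ∀ q a, (δ q a).Nonempty)
    (hψ : ∀ S, S.card ≤ 1 → ψ S = 0)
    (hdrop : ∀ S, 2 ≤ S.card → ∃ a, ψ (nfaStep δ S a) + 1 = ψ S)
    {S : Finset (Fin n)} (hS : S.Nonempty) : ∃ w, nfaSync δ S w ∧ w.length = ψ S := by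
  induction hk : ψ S using Nat.strong_induction_on generalizing S with
  | _ k ih =>
  rcases le_or_gt 2 S.card with h2 | h1
  · obtain ⟨a, ha⟩ := hdrop S h2
    obtain ⟨w, hw, hlen⟩ :=
      ih _ (by omega) (S := nfaStep δ S a) (hS.biUnion fun q _ => hne q a) rfl
    exact ⟨a :: w, hw, by simp [hlen, ← hk, ← ha]⟩
  · refine ⟨[], ?_, by simp [← hk, hψ S (by omega)]⟩
    have := hS.card_pos
    show S.card = 1
    omega

theorem nfaShortestSync_of_potential (hne : ∀ q a, (δ q a).Nonempty)
    (hψ : ∀ S, S.card ≤ 1 → ψ S = 0)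
    (hle : ∀ S a, 2 ≤ S.card → ψ S ≤ ψ (nfaStep δ S a) + 1)
    (hdrop : ∀ S, 2 ≤ S.card → ∃ a, ψ (nfaStep δ S a) + 1 = ψ S)
    {S : Finset (Fin n)} (hS : S.Nonempty) : nfaShortestSync δ S (ψ S) :=
  ⟨exists_nfaSync_length_eq ψ hne hψ hdrop hS, fun _ hw => le_length_of_nfaSync ψ hψ hle hw⟩

end NFAPotential

namespace SlowSync

open Finset

section Potential

variable {n : ℕ}

def binVal (S : Finset (Fin n)) : ℕ := ∑ q ∈ S, 2 ^ (q : ℕ)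

lemma binVal_eq_sum_map (S : Finset (Fin n)) :
    binVal S = ∑ k ∈ S.map Fin.valEmbedding, 2 ^ k := by
  simp [binVal]

lemma binVal_mono {S T : Finset (Fin n)} (h : S ⊆ T) : binVal S ≤ binVal T :=
  sum_le_sum_of_subset h

lemma binVal_erase_add {S : Finset (Fin n)} {q : Fin n} (h : q ∈ S) :
    binVal (S.erase q) + 2 ^ (q : ℕ) = binVal S :=
  sum_erase_add _ _ h

lemma binVal_union {S T : Finset (Fin n)} (h : Disjoint S T) :
    binVal (S ∪ T) = binVal S + binVal T :=
  sum_union h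

lemma binVal_lt_two_pow {S : Finset (Fin n)} {b : ℕ} (h : ∀ q ∈ S, (q : ℕ) < b) :
    binVal S < 2 ^ b := by
  rw [binVal_eq_sum_map]
  exact Nat.geomSum_lt le_rfl (by simpa using h)

lemma binVal_Iio (t : Fin n) : binVal (Iio t) = 2 ^ (t : ℕ) - 1 := by
  rw [binVal_eq_sum_map, Fin.map_valEmbedding_Iio, Nat.Iio_eq_range, Nat.geomSum_eq le_rfl]
  simp

lemma binVal_univ : binVal (univ : Finset (Fin n)) = 2 ^ n - 1 := by
  rw [binVal, Fin.sum_univ_eq_sum_range (fun k => 2 ^ k), Nat.geomSum_eq le_rfl]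
  simp

lemma binVal_Ici (b : Fin n) : binVal (Ici b) = 2 ^ n - 2 ^ (b : ℕ) := by
  have h := sum_range_add_sum_Ico (fun k => 2 ^ k) b.isLt.le
  rw [Nat.geomSum_eq le_rfl, Nat.geomSum_eq le_rfl] at h
  rw [binVal_eq_sum_map, Fin.map_valEmbedding_Ici]
  have := Nat.one_le_two_pow (n := (b : ℕ))
  have := Nat.pow_le_pow_right two_pos b.isLt.le
  simp only [Nat.add_one_sub_one, Nat.div_one] at h
  omega

lemma log_binVal {S : Finset (Fin n)} (hS : S.Nonempty) :
    Nat.log 2 (binVal S) = S.max' hS := by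
  refine Nat.log_eq_of_pow_le_of_lt_pow ?_ ?_
  · exact single_le_sum (f := fun q : Fin n => 2 ^ (q : ℕ)) (fun _ _ => Nat.zero_le _)
      (S.max'_mem hS)
  · exact binVal_lt_two_pow fun q hq => Nat.lt_succ_of_le (S.le_max' q hq)

lemma two_pow_log_binVal_lt {S : Finset (Fin n)} (hS : 2 ≤ S.card) :
    2 ^ Nat.log 2 (binVal S) < binVal S := by
  have hne : S.Nonempty := card_pos.1 (by omega)
  obtain ⟨q, hq, hqM⟩ := exists_mem_ne (by omega : 1 < S.card) (S.max' hne)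
  have hle := binVal_mono (S := {q}) (singleton_subset_iff.2 (mem_erase.2 ⟨hqM, hq⟩))
  have := binVal_erase_add (S.max'_mem hne)
  rw [log_binVal hne]
  simp only [binVal, sum_singleton] at hle this ⊢
  have := Nat.one_le_two_pow (n := (q : ℕ))
  omega

/-- `v - ⌊log₂ v⌋ - 1` is the number of integers in `[1, v]` that are not powers of two. -/
def nonPowTwoCount (v : ℕ) : ℕ := v - Nat.log 2 v - 1

lemma log_succ_le (v : ℕ) : Nat.log 2 (v + 1) ≤ Nat.log 2 v + 1 := by
  rcases Nat.eq_zero_or_pos v with rfl | hv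
  · simp
  · calc Nat.log 2 (v + 1) ≤ Nat.log 2 (v * 2) := Nat.log_mono_right (by omega)
      _ = Nat.log 2 v + 1 := Nat.log_mul_base one_lt_two hv.ne'

lemma nonPowTwoCount_monotone : Monotone nonPowTwoCount :=
  monotone_nat_of_le_succ fun v => by
    have := log_succ_le v
    unfold nonPowTwoCount
    omega

lemma nonPowTwoCount_succ_le (v : ℕ) : nonPowTwoCount (v + 1) ≤ nonPowTwoCount v + 1 := by
  have : Nat.log 2 v ≤ Nat.log 2 (v + 1) := Nat.log_mono_right (Nat.le_succ v)
  unfold nonPowTwoCount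
  omega

lemma nonPowTwoCount_succ {v : ℕ} (hv : 2 ^ Nat.log 2 (v + 1) < v + 1) :
    nonPowTwoCount (v + 1) = nonPowTwoCount v + 1 := by
  have hlog : Nat.log 2 v = Nat.log 2 (v + 1) :=
    Nat.log_eq_of_pow_le_of_lt_pow (by omega)
      ((Nat.lt_succ_self v).trans (Nat.lt_pow_succ_log_self one_lt_two _))
  have : Nat.log 2 (v + 1) < 2 ^ Nat.log 2 (v + 1) := Nat.lt_two_pow_self
  unfold nonPowTwoCount
  omega

lemma nonPowTwoCount_two_pow_add_one {t : ℕ} (ht : 1 ≤ t) :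
    nonPowTwoCount (2 ^ t + 1) = nonPowTwoCount (2 ^ t - 1) + 1 := by
  have h2t : 2 ^ t = 2 ^ (t - 1) * 2 := by rw [← pow_succ]; congr 1; omega
  have hlt : t < 2 ^ t := Nat.lt_two_pow_self
  have h₁ : Nat.log 2 (2 ^ t + 1) = t :=
    Nat.log_eq_of_pow_le_of_lt_pow (by omega) (by rw [pow_succ]; omega)
  have h₂ : Nat.log 2 (2 ^ t - 1) = t - 1 :=
    Nat.log_eq_of_pow_le_of_lt_pow (by omega) (by rw [Nat.sub_add_cancel ht]; omega)
  unfold nonPowTwoCount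
  rw [h₁, h₂]
  omega

lemma nonPowTwoCount_of_two_pow_le {k v : ℕ} (hk : 1 ≤ k) (h₁ : 2 ^ (k - 1) ≤ v)
    (h₂ : v < 2 ^ k) : nonPowTwoCount v = v - k := by
  have hlog : Nat.log 2 v = k - 1 :=
    Nat.log_eq_of_pow_le_of_lt_pow h₁ (by rwa [Nat.sub_add_cancel hk])
  have : k - 1 < 2 ^ (k - 1) := Nat.lt_two_pow_self
  unfold nonPowTwoCount
  omega

def potential (S : Finset (Fin n)) : ℕ :=
  if S.card ≤ 1 then 0 else nonPowTwoCount (binVal S)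

lemma potential_of_card_le_one {S : Finset (Fin n)} (h : S.card ≤ 1) : potential S = 0 :=
  if_pos h

lemma potential_of_two_le_card {S : Finset (Fin n)} (h : 2 ≤ S.card) :
    potential S = nonPowTwoCount (binVal S) :=
  if_neg (by omega)

lemma potential_Iio (t : Fin n) : potential (Iio t) = nonPowTwoCount (2 ^ (t : ℕ) - 1) := by
  rcases le_or_gt 2 (t : ℕ) with ht | ht
  · rw [potential_of_two_le_card (by rwa [Fin.card_Iio]), binVal_Iio]
  · rw [potential_of_card_le_one (by rw [Fin.card_Iio]; omega)]
    interval_cases (t : ℕ) <;> rfl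

lemma potential_eq_binVal_sub {S : Finset (Fin n)} (hS : 2 ≤ S.card)
    (h : 2 ^ (n - 1) ≤ binVal S) : potential S = binVal S - n := by
  have : n ≠ 0 := by have := S.card_le_univ; simp at this; omega
  rw [potential_of_two_le_card hS,
    nonPowTwoCount_of_two_pow_le (by omega) h (binVal_lt_two_pow fun q _ => q.isLt)]

lemma potential_univ (hn : 2 ≤ n) : potential (univ : Finset (Fin n)) = 2 ^ n - n - 1 := by
  have : 2 ^ n = 2 ^ (n - 1) * 2 := by rw [← pow_succ, Nat.sub_add_cancel (by omega)]
  rw [potential_eq_binVal_sub (by simpa using hn) (by rw [binVal_univ]; omega), binVal_univ]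
  omega

lemma potential_Ici {b : Fin n} (hb : (b : ℕ) + 2 ≤ n) :
    potential (Ici b) = 2 ^ n - n - 2 ^ (b : ℕ) := by
  have h₁ : 2 ^ (b : ℕ) ≤ 2 ^ (n - 2) := Nat.pow_le_pow_right two_pos (by omega)
  have h₂ : 2 ^ (n - 2) * 4 = 2 ^ n := by
    rw [show (4 : ℕ) = 2 ^ 2 from rfl, ← pow_add, Nat.sub_add_cancel (by omega)]
  have h₃ : 2 ^ (n - 2) * 2 = 2 ^ (n - 1) := by
    rw [← pow_succ]; congr 1; omega
  rw [potential_eq_binVal_sub (by rw [Fin.card_Ici]; omega) (by rw [binVal_Ici]; omega),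
    binVal_Ici]
  omega

lemma potential_le_potential_univ (S : Finset (Fin n)) :
    potential S ≤ potential (univ : Finset (Fin n)) := by
  rcases le_or_gt 2 S.card with hS | hS
  · rw [potential_of_two_le_card hS, potential_of_two_le_card (hS.trans S.card_le_univ)]
    exact nonPowTwoCount_monotone (binVal_mono (subset_univ S))
  · rw [potential_of_card_le_one (by omega)]
    exact Nat.zero_le _

-- `{0, 1}`, of value `3`, is the only set of potential `1`.
lemma potential_le_add_one {S R : Finset (Fin n)} (hS : 2 ≤ S.card)
    (hval : binVal S ≤ binVal R + 1) (hR : R.card ≤ 1 → binVal S ≤ 3) :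
    potential S ≤ potential R + 1 := by
  rw [potential_of_two_le_card hS]
  rcases le_or_gt 2 R.card with hR₂ | hR₁
  · rw [potential_of_two_le_card hR₂]
    exact (nonPowTwoCount_monotone hval).trans (nonPowTwoCount_succ_le _)
  · rw [potential_of_card_le_one (by omega)]
    exact (nonPowTwoCount_monotone (hR (by omega))).trans (by decide)

lemma potential_add_one {S R : Finset (Fin n)} (hS : 2 ≤ S.card) (hR : 2 ≤ R.card)
    (hval : binVal R + 1 = binVal S) : potential R + 1 = potential S := by
  have := two_pow_log_binVal_lt hS
  rw [potential_of_two_le_card hS, potential_of_two_le_card hR, ← hval,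
    nonPowTwoCount_succ (by rwa [hval])]

end Potential

section BiUnion

variable {α : Type*} [DecidableEq α] {S : Finset α} {f : α → Finset α}

lemma biUnion_eq_self (hf : ∀ q ∈ S, f q = {q}) : S.biUnion f = S :=
  (biUnion_congr rfl hf).trans biUnion_singleton_eq_self

lemma biUnion_eq_erase_union {q₀ : α} (h₀ : q₀ ∈ S) (hf : ∀ q ∈ S, q ≠ q₀ → f q = {q}) :
    S.biUnion f = S.erase q₀ ∪ f q₀ := by
  conv_lhs => rw [← insert_erase h₀]
  rw [biUnion_insert, union_comm,
    biUnion_eq_self fun q hq => hf q (mem_of_mem_erase hq) (ne_of_mem_erase hq)]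

lemma biUnion_eq_univ [Fintype α] {q : α} (hq : q ∈ S) (hf : f q = univ) : S.biUnion f = univ :=
  eq_univ_of_forall fun x => mem_biUnion.2 ⟨q, hq, hf ▸ mem_univ x⟩

end BiUnion

section Letters

variable {n : ℕ} {S : Finset (Fin n)}

def borrow (l q : Fin n) : Finset (Fin n) := if q < l then univ else if q = l then Iio l else {q}

lemma biUnion_borrow_of_isLeast {l : Fin n} (hl : l ∈ S) (hmin : ∀ q ∈ S, l ≤ q) :
    S.biUnion (borrow l) = S.erase l ∪ Iio l := by
  simpa [borrow] using biUnion_eq_erase_union (f := borrow l) hl fun q hq hne => by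
    simp [borrow, not_lt.2 (hmin q hq), hne]

lemma binVal_erase_union_Iio {l : Fin n} (hl : l ∈ S) (hmin : ∀ q ∈ S, l ≤ q) :
    binVal (S.erase l ∪ Iio l) + 1 = binVal S := by
  have hdisj : Disjoint (S.erase l) (Iio l) :=
    disjoint_left.2 fun q hq hq' => (mem_Iio.1 hq').not_ge (hmin q (mem_of_mem_erase hq))
  rw [binVal_union hdisj, binVal_Iio, ← binVal_erase_add hl]
  have := Nat.one_le_two_pow (n := (l : ℕ))
  omega

variable [NeZero n]

def dropZero (P : Finset (Fin n)) (q : Fin n) : Finset (Fin n) := if q = 0 then P else {q}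

def skip (t q : Fin n) : Finset (Fin n) := if q = 0 then {0} else if q = t then Iio t else univ

lemma Iio_nonempty_of_ne_zero {t : Fin n} (ht : t ≠ 0) : (Iio t).Nonempty :=
  ⟨0, mem_Iio.2 (Fin.pos_iff_ne_zero.2 ht)⟩

lemma dropZero_nonempty {P : Finset (Fin n)} (hP : P.Nonempty) (q : Fin n) :
    (dropZero P q).Nonempty := by
  unfold dropZero
  split_ifs
  exacts [hP, singleton_nonempty q]

lemma skip_nonempty {t : Fin n} (ht : t ≠ 0) (q : Fin n) : (skip t q).Nonempty := by
  unfold skip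
  split_ifs
  exacts [singleton_nonempty 0, Iio_nonempty_of_ne_zero ht, univ_nonempty]

lemma borrow_nonempty {l : Fin n} (hl : l ≠ 0) (q : Fin n) : (borrow l q).Nonempty := by
  unfold borrow
  split_ifs
  exacts [univ_nonempty, Iio_nonempty_of_ne_zero hl, singleton_nonempty q]

lemma biUnion_dropZero_of_mem (P : Finset (Fin n)) (h : 0 ∈ S) :
    S.biUnion (dropZero P) = S.erase 0 ∪ P := by
  simpa [dropZero] using biUnion_eq_erase_union (f := dropZero P) h fun q _ hq => if_neg hq

lemma biUnion_dropZero_of_notMem (P : Finset (Fin n)) (h : 0 ∉ S) :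
    S.biUnion (dropZero P) = S :=
  biUnion_eq_self fun _ hq => if_neg (ne_of_mem_of_not_mem hq h)

lemma binVal_le_binVal_biUnion_dropZero (P : Finset (Fin n)) :
    binVal S ≤ binVal (S.biUnion (dropZero P)) + 1 := by
  by_cases h : 0 ∈ S
  · rw [biUnion_dropZero_of_mem P h, ← binVal_erase_add h]
    simpa using binVal_mono (subset_union_left (s₂ := P))
  · rw [biUnion_dropZero_of_notMem P h]
    omega

-- A singleton target `{p}` would collapse `{0, p}`, of potential `2 ^ p - p`, in one step.
lemma potential_le_dropZero {P : Finset (Fin n)} (hP : P = {1} ∨ 2 ≤ P.card)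
    (hS : 2 ≤ S.card) : potential S ≤ potential (S.biUnion (dropZero P)) + 1 := by
  refine potential_le_add_one hS (binVal_le_binVal_biUnion_dropZero P) fun hR => ?_
  by_cases h0 : 0 ∈ S
  · rw [biUnion_dropZero_of_mem P h0] at hR
    rcases hP with rfl | hP
    · suffices ∀ q ∈ S, (q : ℕ) < 2 from Nat.le_of_lt_succ (binVal_lt_two_pow this)
      intro q hq
      by_cases hq0 : q = 0
      · simp [hq0]
      rw [card_le_one.1 hR q (mem_union_left _ (mem_erase.2 ⟨hq0, hq⟩)) 1
        (mem_union_right _ (mem_singleton_self 1)), Fin.val_one']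
      exact (Nat.mod_le 1 n).trans_lt one_lt_two
    · exact absurd ((card_le_card subset_union_right).trans hR) (by omega)
  · rw [biUnion_dropZero_of_notMem P h0] at hR
    omega

lemma biUnion_skip_pair {t : Fin n} (ht : t ≠ 0) :
    ({0, t} : Finset (Fin n)).biUnion (skip t) = Iio t := by
  rw [biUnion_insert, singleton_biUnion, skip, if_pos rfl, skip, if_neg ht, if_pos rfl]
  exact union_eq_right.2 (singleton_subset_iff.2 (mem_Iio.2 (Fin.pos_iff_ne_zero.2 ht)))

lemma potential_biUnion_skip_pair {t : Fin n} (ht : t ≠ 0) :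
    potential (({0, t} : Finset (Fin n)).biUnion (skip t)) + 1 = potential {0, t} := by
  have ht' : 1 ≤ (t : ℕ) := Nat.one_le_iff_ne_zero.2 (Fin.val_ne_zero_iff.2 ht)
  rw [biUnion_skip_pair ht, potential_Iio, potential_of_two_le_card (card_pair ht.symm).ge,
    binVal, sum_pair ht.symm, Fin.val_zero, pow_zero, add_comm 1,
    nonPowTwoCount_two_pow_add_one ht']

lemma potential_le_skip {t : Fin n} (ht : t ≠ 0) (hS : 2 ≤ S.card) :
    potential S ≤ potential (S.biUnion (skip t)) + 1 := by
  by_cases h : ∃ q ∈ S, q ≠ 0 ∧ q ≠ t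
  · obtain ⟨q, hq, hq0, hqt⟩ := h
    rw [biUnion_eq_univ hq (by simp [skip, hq0, hqt])]
    exact (potential_le_potential_univ S).trans (Nat.le_succ _)
  · push Not at h
    have hsub : S ⊆ {0, t} := fun q hq => by
      by_cases hq0 : q = 0
      · simp [hq0]
      · simp [h q hq hq0]
    obtain rfl : S = {0, t} := eq_of_subset_of_card_le hsub (card_le_two.trans hS)
    rw [potential_biUnion_skip_pair ht]

lemma two_le_card_erase_union_Iio {l : Fin n} (hl0 : l ≠ 0) (hS : 2 ≤ S.card)
    (hmin : ∀ q ∈ S, l ≤ q) : 2 ≤ (S.erase l ∪ Iio l).card := by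
  obtain ⟨q, hq, hql⟩ := exists_mem_ne (by omega : 1 < S.card) l
  refine one_lt_card.2 ⟨q, mem_union_left _ (mem_erase.2 ⟨hql, hq⟩), 0,
    mem_union_right _ (mem_Iio.2 (Fin.pos_iff_ne_zero.2 hl0)), ?_⟩
  rintro rfl
  exact hl0 (nonpos_iff_eq_zero.1 (hmin 0 hq))

lemma potential_le_borrow {l : Fin n} (hl0 : l ≠ 0) (hS : 2 ≤ S.card) :
    potential S ≤ potential (S.biUnion (borrow l)) + 1 := by
  by_cases hlow : ∃ q ∈ S, q < l
  · obtain ⟨q, hq, hql⟩ := hlow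
    rw [biUnion_eq_univ hq (if_pos hql)]
    exact (potential_le_potential_univ S).trans (Nat.le_succ _)
  push Not at hlow
  by_cases hl : l ∈ S
  · rw [biUnion_borrow_of_isLeast hl hlow, potential_add_one hS
      (two_le_card_erase_union_Iio hl0 hS hlow) (binVal_erase_union_Iio hl hlow)]
  · rw [biUnion_eq_self fun q hq => by
      simp [borrow, not_lt.2 (hlow q hq), ne_of_mem_of_not_mem hq hl]]
    omega

end Letters

section Automaton

variable {n : ℕ}

abbrev Letter (n : ℕ) := Option (Σ i : Fin n, Fin i)

lemma card_letter : Fintype.card (Letter n) = n * (n - 1) / 2 + 1 := by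
  simp [Fintype.card_sigma, Fin.sum_univ_eq_sum_range (fun i => i), sum_range_id]

noncomputable def letterEquiv (n : ℕ) : Letter n ≃ Fin (n * (n - 1) / 2 + 1) :=
  Fintype.equivFinOfCardEq card_letter

variable [NeZero n] {S : Finset (Fin n)}

def letter : Letter n → Fin n → Finset (Fin n)
  | none => dropZero {1}
  | some ⟨i, j⟩ =>
    if (j : ℕ) = 0 then skip i
    else if (j : ℕ) = 1 then borrow ⟨i - 1, by omega⟩
    else dropZero {⟨j, j.isLt.trans i.isLt⟩, i}

noncomputable def slowNFA (n : ℕ) [NeZero n] :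
    Fin n → Fin (n * (n - 1) / 2 + 1) → Finset (Fin n) :=
  fun q a => letter ((letterEquiv n).symm a) q

lemma letter_nonempty (x : Letter n) (q : Fin n) : (letter x q).Nonempty := by
  rcases x with _ | ⟨i, j⟩
  · exact dropZero_nonempty (singleton_nonempty 1) q
  have hi : (i : ℕ) ≠ 0 := by have := j.isLt; omega
  simp only [letter]
  split_ifs with hj0 hj1
  · exact skip_nonempty (Fin.val_ne_zero_iff.1 hi) q
  · exact borrow_nonempty (Fin.val_ne_zero_iff.1 (by simp; omega)) q
  · exact dropZero_nonempty (insert_nonempty _ _) q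

lemma potential_le_biUnion_letter (x : Letter n) (hS : 2 ≤ S.card) :
    potential S ≤ potential (S.biUnion (letter x)) + 1 := by
  rcases x with _ | ⟨i, j⟩
  · exact potential_le_dropZero (Or.inl rfl) hS
  have hi : (i : ℕ) ≠ 0 := by have := j.isLt; omega
  simp only [letter]
  split_ifs with hj0 hj1
  · exact potential_le_skip (Fin.val_ne_zero_iff.1 hi) hS
  · exact potential_le_borrow (Fin.val_ne_zero_iff.1 (by simp; omega)) hS
  · exact potential_le_dropZero (Or.inr (card_pair (by simp [Fin.ext_iff]; omega)).ge) hS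

lemma exists_letter_biUnion_eq_erase_zero (h0 : 0 ∈ S) (hS : 3 ≤ S.card) :
    ∃ x : Letter n, S.biUnion (letter x) = S.erase 0 := by
  have hval1 : ((1 : Fin n) : ℕ) = 1 := by
    have := S.card_le_univ
    rw [Fintype.card_fin] at this
    rw [Fin.val_one', Nat.mod_eq_of_lt (by omega)]
  by_cases h1 : (1 : Fin n) ∈ S
  · refine ⟨none, ?_⟩
    rw [letter, biUnion_dropZero_of_mem _ h0, union_eq_left, singleton_subset_iff]
    exact mem_erase.2 ⟨fun h => by simp [h] at hval1, h1⟩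
  have hcard : 1 < (S.erase 0).card := by rw [card_erase_of_mem h0]; omega
  set s := (S.erase 0).min' (card_pos.1 (by omega))
  set t := (S.erase 0).max' (card_pos.1 (by omega))
  have hst : s < t := min'_lt_max'_of_card _ hcard
  have hs : s ∈ S.erase 0 := min'_mem _ _
  have hs2 : 2 ≤ (s : ℕ) := by
    have hs0 : (s : ℕ) ≠ 0 := Fin.val_ne_zero_iff.2 (ne_of_mem_erase hs)
    have hs1 : (s : ℕ) ≠ 1 := fun h => h1 (by
      rw [show (1 : Fin n) = s from Fin.ext (hval1.trans h.symm)]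
      exact mem_of_mem_erase hs)
    omega
  refine ⟨some ⟨t, ⟨s, hst⟩⟩, ?_⟩
  simp only [letter, show (s : ℕ) ≠ 0 by omega, show (s : ℕ) ≠ 1 by omega, if_false]
  rw [biUnion_dropZero_of_mem _ h0, union_eq_left]
  exact insert_subset hs (singleton_subset_iff.2 (max'_mem _ _))

lemma exists_letter_potential_biUnion (hS : 2 ≤ S.card) :
    ∃ x : Letter n, potential (S.biUnion (letter x)) + 1 = potential S := by
  by_cases h0 : 0 ∈ S
  · rcases (show S.card = 2 ∨ 3 ≤ S.card by omega) with h2 | h3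
    · obtain ⟨t, ht⟩ := card_eq_one.1 (by rw [card_erase_of_mem h0, h2] : (S.erase 0).card = 1)
      have ht0 : t ≠ 0 := ne_of_mem_erase (ht ▸ mem_singleton_self t)
      obtain rfl : S = {0, t} := by rw [← insert_erase h0, ht]
      refine ⟨some ⟨t, ⟨0, Nat.pos_of_ne_zero (Fin.val_ne_zero_iff.2 ht0)⟩⟩, ?_⟩
      simpa [letter] using potential_biUnion_skip_pair ht0
    · obtain ⟨x, hx⟩ := exists_letter_biUnion_eq_erase_zero h0 h3
      refine ⟨x, hx ▸ potential_add_one hS (by rw [card_erase_of_mem h0]; omega) ?_⟩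
      simpa using binVal_erase_add h0
  · have hne : S.Nonempty := card_pos.1 (by omega)
    set l := S.min' hne
    have hl : l ∈ S := min'_mem S hne
    have hl0 : l ≠ 0 := ne_of_mem_of_not_mem hl h0
    have hmin : ∀ q ∈ S, l ≤ q := fun q hq => min'_le S q hq
    have hlt : (l : ℕ) + 1 < n := by
      have := Fin.lt_def.1 (min'_lt_max'_of_card S hS)
      have := (S.max' hne).isLt
      omega
    have hl1 : 1 < (l : ℕ) + 1 := Nat.succ_lt_succ (Nat.pos_of_ne_zero (Fin.val_ne_zero_iff.2 hl0))
    refine ⟨some ⟨⟨l + 1, hlt⟩, ⟨1, hl1⟩⟩, ?_⟩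
    simp only [letter, one_ne_zero, if_false, if_true, Nat.add_sub_cancel, Fin.eta]
    rw [biUnion_borrow_of_isLeast hl hmin]
    exact potential_add_one hS (two_le_card_erase_union_Iio hl0 hS hmin)
      (binVal_erase_union_Iio hl hmin)

theorem nfaShortestSync_slowNFA (hS : S.Nonempty) :
    nfaShortestSync (slowNFA n) S (potential S) :=
  nfaShortestSync_of_potential potential (fun _ _ => letter_nonempty _ _)
    (fun _ => potential_of_card_le_one) (fun _ _ hS => potential_le_biUnion_letter _ hS)
    (fun _ hS => (exists_letter_potential_biUnion hS).imp' (letterEquiv n) fun x hx => by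
      simpa [nfaStep, slowNFA] using hx) hS

end Automaton

end SlowSync

theorem stmt3 (n : ℕ) (hn : 3 ≤ n) :
    ∃ δ : Fin n → Fin (n * (n - 1) / 2 + 1) → Finset (Fin n),
      (∀ q a, (δ q a).Nonempty) ∧
      nfaShortestSync δ Finset.univ (2 ^ n - n - 1) ∧
      (∀ k, 2 ≤ k → k ≤ n → ∃ S : Finset (Fin n), S.card = k ∧
        nfaShortestSync δ S (2 ^ n - n - 2 ^ (n - k))) := by
  have : NeZero n := ⟨by omega⟩
  refine ⟨SlowSync.slowNFA n, fun _ _ => SlowSync.letter_nonempty _ _, ?_, fun k hk2 hkn => ?_⟩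
  · simpa [SlowSync.potential_univ (by omega : 2 ≤ n)] using
      SlowSync.nfaShortestSync_slowNFA (Finset.univ_nonempty (α := Fin n))
  · let b : Fin n := ⟨n - k, by omega⟩
    refine ⟨Finset.Ici b, by simp [b, Fin.card_Ici]; omega, ?_⟩
    simpa [SlowSync.potential_Ici (show (b : ℕ) + 2 ≤ n by simp [b]; omega)] using
      SlowSync.nfaShortestSync_slowNFA (Finset.nonempty_Ici (a := b))
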